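/- arXiv:1503.06127 — 7 statements merged into one kernel-verified Lean document; each statement's English description precedes it below -/
import Mathlib

section
/- For all natural numbers m and n, the tensor product of sl2-crystals B(m) ⊗ B(n) decomposes as a disjoint union of irreducible crystals: B(m) ⊗ B(n) ≅ ⨆_{k=0}^{min(m,n)} B(m+n−2k). -/
/-- `x^i y^j` is represented as `(i, j) : ℕ × ℕ`, an element of the sl2-crystal `B(i+j)`. -/
def et (p : ℕ × ℕ) : Option (ℕ × ℕ) := if p.1 = 0 then none else some (p.1 - 1, p.2 + 1)
def ft (p : ℕ × ℕ) : Option (ℕ × ℕ) := if p.2 = 0 then none else some (p.1 + 1, p.2 - 1)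
def eps (p : ℕ × ℕ) : ℤ := p.1
def phi (p : ℕ × ℕ) : ℤ := p.2
def wt (p : ℕ × ℕ) : ℤ := (p.2 : ℤ) - (p.1 : ℤ)

/-- Kashiwara tensor product rule for `ẽ` on a pair of elements. -/
def etT (b : (ℕ × ℕ) × (ℕ × ℕ)) : Option ((ℕ × ℕ) × (ℕ × ℕ)) :=
  if eps b.2 ≤ phi b.1 then (et b.1).map (fun a => (a, b.2)) else (et b.2).map (fun a => (b.1, a))

/-- Kashiwara tensor product rule for `f̃` on a pair of elements. -/
def ftT (b : (ℕ × ℕ) × (ℕ × ℕ)) : Option ((ℕ × ℕ) × (ℕ × ℕ)) :=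
  if eps b.2 < phi b.1 then (ft b.1).map (fun a => (a, b.2)) else (ft b.2).map (fun a => (b.1, a))

def epsT (b : (ℕ × ℕ) × (ℕ × ℕ)) : ℤ := max (eps b.1) (eps b.2 - wt b.1)
def phiT (b : (ℕ × ℕ) × (ℕ × ℕ)) : ℤ := max (phi b.1 + wt b.2) (phi b.2)
def wtT (b : (ℕ × ℕ) × (ℕ × ℕ)) : ℤ := wt b.1 + wt b.2

/-- Iterated application of a pointed (partial) operator. -/
def iterOp {α : Type} (g : α → Option α) : ℕ → α → Option α
  | 0, a => some a
  | n + 1, a => (g a).bind (iterOp g n)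

/-- The underlying set of the sl2-crystal `B(n)`: monomials `x^i y^j` with `i + j = n`. -/
def Bel (n : ℕ) : Type := {p : ℕ × ℕ // p.1 + p.2 = n}

def etB {n : ℕ} (b : Bel n) : Option (Bel n) :=
  if h : b.val.1 = 0 then none
  else some ⟨(b.val.1 - 1, b.val.2 + 1), by have := b.2; omega⟩

def ftB {n : ℕ} (b : Bel n) : Option (Bel n) :=
  if h : b.val.2 = 0 then none
  else some ⟨(b.val.1 + 1, b.val.2 - 1), by have := b.2; omega⟩

/-- The tensor product crystal `B(m) ⊗ B(n)`. -/
def TP (m n : ℕ) : Type := Bel m × Bel n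

def etTP {m n : ℕ} (b : TP m n) : Option (TP m n) :=
  if eps b.2.val ≤ phi b.1.val then (etB b.1).map (fun a => (a, b.2))
  else (etB b.2).map (fun a => (b.1, a))

def ftTP {m n : ℕ} (b : TP m n) : Option (TP m n) :=
  if eps b.2.val < phi b.1.val then (ftB b.1).map (fun a => (a, b.2))
  else (ftB b.2).map (fun a => (b.1, a))

/-- The disjoint union `⨆_{k=0}^{min(m,n)} B(m+n-2k)`. -/
def CG (m n : ℕ) : Type := Σ k : Fin (min m n + 1), Bel (m + n - 2 * (k : ℕ))

def etCG {m n : ℕ} (b : CG m n) : Option (CG m n) := (etB b.2).map (fun a => ⟨b.1, a⟩)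
def ftCG {m n : ℕ} (b : CG m n) : Option (CG m n) := (ftB b.2).map (fun a => ⟨b.1, a⟩)

/-! In the signature rule the `φ(b₁)` brackets of `b₁` face the `ε(b₂)` brackets of `b₂`, and
`k = min(φ b₁, ε b₂)` of them cancel. The operators `ẽ`, `f̃` act on uncancelled brackets only, so
they never change `k`: `b₁ ⊗ b₂` lies in a copy of `B(m + n - 2k)`, at height `ε b₁ + ε b₂ - k`.
Conversely `k` and the height recover `b₁ ⊗ b₂`, according to whether the height is reached
within `b₁` or only after moving into `b₂`. -/

def cgExp (p : (ℕ × ℕ) × (ℕ × ℕ)) : ℕ × (ℕ × ℕ) :=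
  (min p.1.2 p.2.1, (p.1.1 + p.2.1 - min p.1.2 p.2.1, p.1.2 + p.2.2 - min p.1.2 p.2.1))

theorem cgExp_of_le {i₁ j₁ i₂ j₂ : ℕ} (h : i₂ ≤ j₁) :
    cgExp ((i₁, j₁), (i₂, j₂)) = (i₂, (i₁, j₁ + j₂ - i₂)) := by
  simp only [cgExp, min_eq_right h, Nat.add_sub_cancel]

theorem cgExp_of_ge {i₁ j₁ i₂ j₂ : ℕ} (h : j₁ ≤ i₂) :
    cgExp ((i₁, j₁), (i₂, j₂)) = (j₁, (i₁ + i₂ - j₁, j₂)) := by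
  simp only [cgExp, min_eq_left h, Nat.add_sub_cancel_left]

theorem cgExp_etT (p : (ℕ × ℕ) × (ℕ × ℕ)) :
    (etT p).map cgExp = (et (cgExp p).2).map ((cgExp p).1, ·) := by
  obtain ⟨⟨i₁, j₁⟩, ⟨i₂, j₂⟩⟩ := p
  rcases le_or_gt i₂ j₁ with h | h
  · by_cases h₁ : i₁ = 0
    · simp [etT, et, eps, phi, h, h₁, cgExp_of_le h]
    · have h' : i₂ ≤ j₁ + 1 := by omega
      simp only [etT, et, eps, phi, Nat.cast_le, h, h₁, ↓reduceIte, Option.map_some,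
        cgExp_of_le h, cgExp_of_le h', Option.some.injEq, Prod.mk.injEq, true_and]
      omega
  · have h' : j₁ ≤ i₂ - 1 := by omega
    have h₂ : i₂ ≠ 0 := by omega
    have h₃ : i₁ + i₂ - j₁ ≠ 0 := by omega
    simp only [etT, et, eps, phi, Nat.cast_le, h.not_ge, h₂, h₃, ↓reduceIte, Option.map_some,
      cgExp_of_ge h.le, cgExp_of_ge h', Option.some.injEq, Prod.mk.injEq, true_and, and_true]
    omega

theorem cgExp_ftT (p : (ℕ × ℕ) × (ℕ × ℕ)) :
    (ftT p).map cgExp = (ft (cgExp p).2).map ((cgExp p).1, ·) := by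
  obtain ⟨⟨i₁, j₁⟩, ⟨i₂, j₂⟩⟩ := p
  rcases lt_or_ge i₂ j₁ with h | h
  · have h' : i₂ ≤ j₁ - 1 := by omega
    have h₁ : j₁ ≠ 0 := by omega
    have h₃ : j₁ + j₂ - i₂ ≠ 0 := by omega
    simp only [ftT, ft, eps, phi, Nat.cast_lt, h, h₁, h₃, ↓reduceIte, Option.map_some,
      cgExp_of_le h.le, cgExp_of_le h', Option.some.injEq, Prod.mk.injEq, true_and]
    omega
  · by_cases h₂ : j₂ = 0
    · simp [ftT, ft, eps, phi, h.not_gt, h₂, cgExp_of_ge h]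
    · have h' : j₁ ≤ i₂ + 1 := by omega
      simp only [ftT, ft, eps, phi, Nat.cast_lt, h.not_gt, h₂, ↓reduceIte, Option.map_some,
        cgExp_of_ge h, cgExp_of_ge h', Option.some.injEq, Prod.mk.injEq, true_and, and_true]
      omega

def tpExp (m n : ℕ) (v : ℕ × (ℕ × ℕ)) : (ℕ × ℕ) × (ℕ × ℕ) :=
  if v.2.1 ≤ m - v.1 then ((v.2.1, m - v.2.1), (v.1, n - v.1))
  else ((m - v.1, v.1), (v.2.1 + 2 * v.1 - m, v.2.2))

theorem tpExp_cgExp {m n : ℕ} {p : (ℕ × ℕ) × (ℕ × ℕ)} (h₁ : p.1.1 + p.1.2 = m)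
    (h₂ : p.2.1 + p.2.2 = n) : tpExp m n (cgExp p) = p := by
  obtain ⟨⟨i₁, j₁⟩, ⟨i₂, j₂⟩⟩ := p
  dsimp only at h₁ h₂
  rcases le_total i₂ j₁ with h | h
  · rw [cgExp_of_le h, tpExp, if_pos (by dsimp only; omega)]
    ext <;> dsimp only <;> omega
  · rw [cgExp_of_ge h, tpExp]
    dsimp only
    split_ifs <;> ext <;> dsimp only <;> omega

theorem cgExp_tpExp {m n : ℕ} {v : ℕ × (ℕ × ℕ)} (hk : v.1 ≤ min m n)
    (hv : v.2.1 + v.2.2 = m + n - 2 * v.1) : cgExp (tpExp m n v) = v := by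
  obtain ⟨k, i, j⟩ := v
  dsimp only at hk hv
  by_cases h : i ≤ m - k
  · rw [tpExp, if_pos h]
    dsimp only
    rw [cgExp_of_le (by omega), Prod.mk.injEq, Prod.mk.injEq]
    omega
  · rw [tpExp, if_neg h]
    dsimp only
    rw [cgExp_of_ge (by omega), Prod.mk.injEq, Prod.mk.injEq]
    omega

theorem tpExp_degrees {m n : ℕ} {v : ℕ × (ℕ × ℕ)} (hk : v.1 ≤ min m n)
    (hv : v.2.1 + v.2.2 = m + n - 2 * v.1) :
    (tpExp m n v).1.1 + (tpExp m n v).1.2 = m ∧ (tpExp m n v).2.1 + (tpExp m n v).2.2 = n := by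
  unfold tpExp
  split_ifs <;> dsimp only <;> omega

theorem wtT_eq_wt_cgExp (p : (ℕ × ℕ) × (ℕ × ℕ)) : wtT p = wt (cgExp p).2 := by
  simp only [wtT, wt, cgExp]
  omega

theorem epsT_eq_eps_cgExp (p : (ℕ × ℕ) × (ℕ × ℕ)) : epsT p = eps (cgExp p).2 := by
  simp only [epsT, eps, wt, cgExp]
  omega

theorem phiT_eq_phi_cgExp (p : (ℕ × ℕ) × (ℕ × ℕ)) : phiT p = phi (cgExp p).2 := by
  simp only [phiT, phi, wt, cgExp]
  omega

theorem etB_map {n : ℕ} {β : Type} (f : ℕ × ℕ → β) (b : Bel n) :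
    (etB b).map (fun a => f a.val) = (et b.val).map f := by
  by_cases h : b.val.1 = 0 <;> simp only [etB, et, h, ↓reduceDIte, ↓reduceIte] <;> rfl

theorem ftB_map {n : ℕ} {β : Type} (f : ℕ × ℕ → β) (b : Bel n) :
    (ftB b).map (fun a => f a.val) = (ft b.val).map f := by
  by_cases h : b.val.2 = 0 <;> simp only [ftB, ft, h, ↓reduceDIte, ↓reduceIte] <;> rfl

def TP.val {m n : ℕ} (b : TP m n) : (ℕ × ℕ) × (ℕ × ℕ) := (b.1.val, b.2.val)

theorem TP.val_injective {m n : ℕ} : Function.Injective (TP.val (m := m) (n := n)) :=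
  fun _ _ h => Prod.ext (Subtype.ext (congrArg Prod.fst h)) (Subtype.ext (congrArg Prod.snd h))

theorem etTP_map_val {m n : ℕ} (b : TP m n) : (etTP b).map TP.val = etT b.val := by
  obtain ⟨b₁, b₂⟩ := b
  by_cases h : eps b₂.val ≤ phi b₁.val
  · simp only [etTP, etT, TP.val, h, ↓reduceIte]
    exact (Option.map_map _ _ _).trans (etB_map (·, b₂.val) b₁)
  · simp only [etTP, etT, TP.val, h, ↓reduceIte]
    exact (Option.map_map _ _ _).trans (etB_map (b₁.val, ·) b₂)

theorem ftTP_map_val {m n : ℕ} (b : TP m n) : (ftTP b).map TP.val = ftT b.val := by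
  obtain ⟨b₁, b₂⟩ := b
  by_cases h : eps b₂.val < phi b₁.val
  · simp only [ftTP, ftT, TP.val, h, ↓reduceIte]
    exact (Option.map_map _ _ _).trans (ftB_map (·, b₂.val) b₁)
  · simp only [ftTP, ftT, TP.val, h, ↓reduceIte]
    exact (Option.map_map _ _ _).trans (ftB_map (b₁.val, ·) b₂)

def CG.val {m n : ℕ} (c : CG m n) : ℕ × (ℕ × ℕ) := (c.1, c.2.val)

theorem CG.val_injective {m n : ℕ} : Function.Injective (CG.val (m := m) (n := n)) := by
  rintro ⟨k, ⟨v, hv⟩⟩ ⟨k', ⟨v', hv'⟩⟩ h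
  obtain rfl : k = k' := Fin.ext (congrArg Prod.fst h)
  obtain rfl : v = v' := congrArg Prod.snd h
  rfl

theorem etCG_map_val {m n : ℕ} (c : CG m n) :
    (etCG c).map CG.val = (et c.val.2).map (c.val.1, ·) :=
  (Option.map_map _ _ _).trans (etB_map (c.val.1, ·) c.2)

theorem ftCG_map_val {m n : ℕ} (c : CG m n) :
    (ftCG c).map CG.val = (ft c.val.2).map (c.val.1, ·) :=
  (Option.map_map _ _ _).trans (ftB_map (c.val.1, ·) c.2)

def TP.toCG {m n : ℕ} (b : TP m n) : CG m n :=
  ⟨⟨(cgExp b.val).1, by have := b.1.2; have := b.2.2; simp only [cgExp, TP.val]; omega⟩,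
   ⟨(cgExp b.val).2, by have := b.1.2; have := b.2.2; simp only [cgExp, TP.val]; omega⟩⟩

theorem CG.val_fst_le {m n : ℕ} (c : CG m n) : c.val.1 ≤ min m n := Nat.lt_succ_iff.1 c.1.2

theorem CG.val_snd_sum {m n : ℕ} (c : CG m n) : c.val.2.1 + c.val.2.2 = m + n - 2 * c.val.1 :=
  c.2.2

def CG.toTP {m n : ℕ} (c : CG m n) : TP m n :=
  (⟨(tpExp m n c.val).1, (tpExp_degrees c.val_fst_le c.val_snd_sum).1⟩,
   ⟨(tpExp m n c.val).2, (tpExp_degrees c.val_fst_le c.val_snd_sum).2⟩)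

theorem CG.toTP_toCG {m n : ℕ} (b : TP m n) : b.toCG.toTP = b :=
  TP.val_injective (tpExp_cgExp b.1.2 b.2.2)

theorem TP.toCG_toTP {m n : ℕ} (c : CG m n) : c.toTP.toCG = c :=
  CG.val_injective (cgExp_tpExp c.val_fst_le c.val_snd_sum)

def tpEquivCG (m n : ℕ) : TP m n ≃ CG m n where
  toFun := TP.toCG
  invFun := CG.toTP
  left_inv := CG.toTP_toCG
  right_inv := TP.toCG_toTP

theorem TP.toCG_etTP {m n : ℕ} (b : TP m n) : (etTP b).map TP.toCG = etCG b.toCG := by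
  apply Option.map_injective CG.val_injective
  calc ((etTP b).map TP.toCG).map CG.val = ((etTP b).map TP.val).map cgExp :=
        (Option.map_map _ _ _).trans (Option.map_map cgExp TP.val _).symm
    _ = (et (cgExp b.val).2).map ((cgExp b.val).1, ·) := by rw [etTP_map_val, cgExp_etT]
    _ = (etCG b.toCG).map CG.val := (etCG_map_val b.toCG).symm

theorem TP.toCG_ftTP {m n : ℕ} (b : TP m n) : (ftTP b).map TP.toCG = ftCG b.toCG := by
  apply Option.map_injective CG.val_injective
  calc ((ftTP b).map TP.toCG).map CG.val = ((ftTP b).map TP.val).map cgExp :=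
        (Option.map_map _ _ _).trans (Option.map_map cgExp TP.val _).symm
    _ = (ft (cgExp b.val).2).map ((cgExp b.val).1, ·) := by rw [ftTP_map_val, cgExp_ftT]
    _ = (ftCG b.toCG).map CG.val := (ftCG_map_val b.toCG).symm

/-- Clebsch–Gordan for sl2 crystals.  For all `m n : ℕ` there is an
isomorphism of crystals `B(m) ⊗ B(n) ≅ ⨆_{k=0}^{min(m,n)} B(m+n−2k)`: a bijection of the
underlying (nonzero) elements commuting with the Kashiwara operators `ẽ`, `f̃` and
preserving `wt`, `ε` and `φ`. -/
theorem stmt0 (m n : ℕ) :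
    ∃ e : TP m n ≃ CG m n,
      (∀ b : TP m n, Option.map e (etTP b) = etCG (e b)) ∧
      (∀ b : TP m n, Option.map e (ftTP b) = ftCG (e b)) ∧
      (∀ b : TP m n, wtT (b.1.val, b.2.val) = wt (e b).2.val) ∧
      (∀ b : TP m n, epsT (b.1.val, b.2.val) = eps (e b).2.val) ∧
      (∀ b : TP m n, phiT (b.1.val, b.2.val) = phi (e b).2.val) :=
  ⟨tpEquivCG m n, TP.toCG_etTP, TP.toCG_ftTP, fun b => wtT_eq_wt_cgExp b.val,
    fun b => epsT_eq_eps_cgExp b.val, fun b => phiT_eq_phi_cgExp b.val⟩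
end

section
/- For m ≥ n and 0 ≤ k ≤ n, the element y^m ⊗ x^k y^{n−k} ∈ B(m) ⊗ B(n) is a highest weight element (ẽ kills it), and f̃^i(y^m ⊗ x^k y^{n−k}) equals x^i y^{m−i} ⊗ x^k y^{n−k} if i < m−k, equals x^{m−k} y^k ⊗ x^{i+2k−m} y^{m+n−2k−i} if m−k ≤ i ≤ m+n−2k, and equals 0 if i > m+n−2k. -/
theorem iterOp_add' {α} (g : α → Option α) (p q : ℕ) (a : α) :
    iterOp g (p + q) a = (iterOp g p a).bind (iterOp g q) := by
  induction p generalizing a with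
  | zero => simp [iterOp]
  | succ p ih =>
    have h : p + 1 + q = (p + q) + 1 := by omega
    rw [h]
    show (g a).bind (iterOp g (p + q)) = ((g a).bind (iterOp g p)).bind (iterOp g q)
    cases g a with
    | none => simp
    | some b => simp [ih]

theorem iterOp_succ' {α} (g : α → Option α) (n : ℕ) (a : α) :
    iterOp g (n + 1) a = (iterOp g n a).bind g := by
  rw [iterOp_add']
  congr 1
  funext b
  simp [iterOp]

/-- For `m ≥ n` and `0 ≤ k ≤ n`, the element
`y^m ⊗ x^k y^{n−k} ∈ B(m) ⊗ B(n)` is a highest weight element (`ẽ` kills it), and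
`f̃^i (y^m ⊗ x^k y^{n−k})` equals `x^i y^{m−i} ⊗ x^k y^{n−k}` if `i < m−k`, equals
`x^{m−k} y^k ⊗ x^{i+2k−m} y^{m+n−2k−i}` if `m−k ≤ i ≤ m+n−2k`, and equals `0` if
`i > m+n−2k`. -/
theorem stmt1 (m n k : ℕ) (hmn : n ≤ m) (hk : k ≤ n) :
    etT ((0, m), (k, n - k)) = none ∧
    (∀ i : ℕ, i < m - k →
      iterOp ftT i ((0, m), (k, n - k)) = some ((i, m - i), (k, n - k))) ∧
    (∀ i : ℕ, m - k ≤ i → i ≤ m + n - 2 * k →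
      iterOp ftT i ((0, m), (k, n - k)) =
        some ((m - k, k), (i + 2 * k - m, m + n - 2 * k - i))) ∧
    (∀ i : ℕ, m + n - 2 * k < i → iterOp ftT i ((0, m), (k, n - k)) = none) := by
  have hB : ∀ i, i ≤ m - k → iterOp ftT i ((0, m), (k, n - k)) = some ((i, m - i), (k, n - k)) := by
    intro i
    induction i with
    | zero => intro _; simp [iterOp]
    | succ i ih =>
      intro h
      rw [iterOp_succ', ih (by omega), Option.bind_some]
      simp only [ftT, ft, eps, phi]
      rw [if_pos (by omega), if_neg (by omega), Option.map_some]
      simp only [Option.some.injEq, Prod.mk.injEq, true_and, and_true]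
      omega
  have hC : ∀ j, j ≤ n - k → iterOp ftT (m - k + j) ((0, m), (k, n - k)) =
      some ((m - k, k), (k + j, n - k - j)) := by
    intro j
    induction j with
    | zero =>
      intro _
      have := hB (m - k) le_rfl
      rw [Nat.add_zero, this]
      simp only [Option.some.injEq, Prod.mk.injEq, true_and, and_true]
      omega
    | succ j ih =>
      intro h
      have h1 : m - k + (j + 1) = (m - k + j) + 1 := by omega
      rw [h1, iterOp_succ', ih (by omega), Option.bind_some]
      simp only [ftT, ft, eps, phi]
      rw [if_neg (by push_cast; omega), if_neg (by omega), Option.map_some]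
      simp only [Option.some.injEq, Prod.mk.injEq, true_and, and_true]
      omega
  have hD0 : iterOp ftT (m + n - 2 * k + 1) ((0, m), (k, n - k)) = none := by
    have h1 : m + n - 2 * k + 1 = (m - k + (n - k)) + 1 := by omega
    rw [h1, iterOp_succ', hC (n - k) le_rfl, Option.bind_some]
    simp only [ftT, ft, eps, phi]
    rw [if_neg (by push_cast; omega), if_pos (by omega)]
    rfl
  refine ⟨?_, ?_, ?_, ?_⟩
  · simp only [etT, et, eps, phi]
    rw [if_pos (by omega)]
    simp
  · intro i hi
    exact hB i (by omega)
  · intro i h1 h2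
    have := hC (i - (m - k)) (by omega)
    rw [show m - k + (i - (m - k)) = i by omega] at this
    rw [this]
    simp only [Option.some.injEq, Prod.mk.injEq, true_and, and_true]
    omega
  · intro i hi
    obtain ⟨t, rfl⟩ : ∃ t, i = (m + n - 2 * k + 1) + t := ⟨i - (m + n - 2 * k + 1), by omega⟩
    rw [iterOp_add', hD0]
    rfl
end

section
/- Every finite irreducible (connected) sl2-crystal is isomorphic to B(l) ⊗ T_λ for some l ∈ ℕ and λ ∈ ℤ, where the isomorphism sends x^i y^{l−i} ⊗ t_λ to f̃^i c₀ for c₀ the highest weight element. -/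
/-- An sl2-crystal structure, with `ε, φ` valued in `ℤ ∪ {−∞}`. -/
structure SL2CrW (A : Type) where
  e : A → Option A
  f : A → Option A
  ε : A → WithBot ℤ
  φ : A → WithBot ℤ
  w : A → ℤ

/-- The axioms of an (abstract) sl2-crystal on the set of nonzero elements `A`. -/
structure IsCrystal {A : Type} (C : SL2CrW A) : Prop where
  phi_eq : ∀ a, C.φ a = (C.w a : WithBot ℤ) + C.ε a
  wt_e : ∀ a b, C.e a = some b → C.w b = C.w a + 2
  eps_e : ∀ a b, C.e a = some b → C.ε a = C.ε b + 1
  phi_e : ∀ a b, C.e a = some b → C.φ b = C.φ a + 1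
  wt_f : ∀ a b, C.f a = some b → C.w b = C.w a - 2
  eps_f : ∀ a b, C.f a = some b → C.ε b = C.ε a + 1
  phi_f : ∀ a b, C.f a = some b → C.φ a = C.φ b + 1
  ef : ∀ a b, C.f a = some b ↔ C.e b = some a
  bot : ∀ a, C.φ a = ⊥ → C.e a = none ∧ C.f a = none

/-- Kashiwara tensor product of sl2 crystals. -/
noncomputable def tensorW {A B : Type} (C : SL2CrW A) (D : SL2CrW B) : SL2CrW (A × B) where
  e p := if D.ε p.2 ≤ C.φ p.1 then (C.e p.1).map (fun a => (a, p.2))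
         else (D.e p.2).map (fun a => (p.1, a))
  f p := if D.ε p.2 < C.φ p.1 then (C.f p.1).map (fun a => (a, p.2))
         else (D.f p.2).map (fun a => (p.1, a))
  ε p := max (C.ε p.1) (D.ε p.2 + ((-(C.w p.1) : ℤ) : WithBot ℤ))
  φ p := max (C.φ p.1 + ((D.w p.2 : ℤ) : WithBot ℤ)) (D.φ p.2)
  w p := C.w p.1 + D.w p.2

/-- The singleton crystal `T_λ` with `wt(t_λ) = λ` and `ε = φ = −∞`. -/
def Tcr (lam : ℤ) : SL2CrW PUnit :=
  ⟨fun _ => none, fun _ => none, fun _ => ⊥, fun _ => ⊥, fun _ => lam⟩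

/-- The standard crystal structure on `B(l)`. -/
def BelCrW (l : ℕ) : SL2CrW (Bel l) where
  e := etB
  f := ftB
  ε b := ((b.val.1 : ℤ) : WithBot ℤ)
  φ b := ((b.val.2 : ℤ) : WithBot ℤ)
  w b := (b.val.2 : ℤ) - (b.val.1 : ℤ)

/-- The crystal `B(l) ⊗ T_λ`. -/
noncomputable def BT (l : ℕ) (lam : ℤ) : SL2CrW (Bel l × PUnit) := tensorW (BelCrW l) (Tcr lam)

/-! Because `ε` and `φ` count how often `ẽ` and `f̃` apply, they take values in `ℕ`, and the end
`c₀` of any `ẽ`-string is a highest weight element with `ε c₀ = 0`. Writing `l = φ c₀`, the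
`f̃`-string `c₀, f̃ c₀, …, f̃^l c₀` has `ε = i` and `φ = l - i` at `f̃^i c₀`; so it is stable under
`ẽ` and `f̃` and, by connectedness, it is the whole crystal. The weight is `φ - ε`, hence `λ = 0`. -/

theorem iterOp_succ_eq_bind {α : Type} (g : α → Option α) (n : ℕ) (a : α) :
    iterOp g (n + 1) a = (iterOp g n a).bind g := by
  induction n generalizing a with
  | zero => simp [iterOp]
  | succ n ih =>
    change (g a).bind (iterOp g (n + 1)) = ((g a).bind (iterOp g n)).bind g
    cases g a with
    | none => rfl
    | some a' => exact ih a'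

theorem iterOp_one {α : Type} (g : α → Option α) (a : α) : iterOp g 1 a = g a := by
  simp [iterOp]

def CountsIterates {α : Type} (g : α → Option α) (c : α → WithBot ℤ) : Prop :=
  ∀ (a : α) (n : ℕ), iterOp g n a = none ↔ c a < (n : ℤ)

namespace CountsIterates

variable {α : Type} {g : α → Option α} {c : α → WithBot ℤ}

theorem exists_eq_natCast (h : CountsIterates g c) (a : α) : ∃ n : ℕ, c a = (n : ℤ) := by
  have hnonneg : ¬ c a < ((0 : ℕ) : ℤ) := by rw [← h a 0]; simp [iterOp]
  cases hca : c a with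
  | bot => simp [hca] at hnonneg
  | coe z =>
    rw [hca] at hnonneg
    exact ⟨z.toNat, by norm_cast at hnonneg ⊢; omega⟩

theorem eq_none_iff (h : CountsIterates g c) (a : α) : g a = none ↔ c a = (0 : ℤ) := by
  obtain ⟨n, hn⟩ := h.exists_eq_natCast a
  rw [← iterOp_one g a, h a 1, hn]
  norm_cast
  omega

theorem exists_eq_none (h : CountsIterates g c) (a : α) : ∃ b, g b = none := by
  obtain ⟨n, hn⟩ := h.exists_eq_natCast a
  obtain ⟨b, hb⟩ := Option.ne_none_iff_exists'.mp ((h a n).not.mpr (by simp [hn]))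
  refine ⟨b, ?_⟩
  rw [← Option.bind_some b g, ← hb, ← iterOp_succ_eq_bind, h a (n + 1), hn]
  norm_cast
  omega

end CountsIterates

namespace IsCrystal

variable {A : Type} {C : SL2CrW A}

theorem ε_φ_of_iterOp_f_eq_some (hC : IsCrystal C) {n : ℕ} {a b : A}
    (hab : iterOp C.f n a = some b) :
    C.ε b = C.ε a + (n : ℤ) ∧ C.φ a = C.φ b + (n : ℤ) := by
  induction n generalizing b with
  | zero => cases hab; simp
  | succ n ih =>
    rw [iterOp_succ_eq_bind, Option.bind_eq_some_iff] at hab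
    obtain ⟨a', ha', hf⟩ := hab
    obtain ⟨hε, hφ⟩ := ih ha'
    rw [hC.eps_f _ _ hf, hε, hφ, hC.phi_f _ _ hf]
    push_cast
    constructor <;> ac_rfl

theorem w_eq_sub (hC : IsCrystal C) {a : A} {m n : ℤ} (hε : C.ε a = m) (hφ : C.φ a = n) :
    C.w a = n - m := by
  have h := hC.phi_eq a
  rw [hε, hφ] at h
  norm_cast at h
  omega

end IsCrystal

structure IsSeminormal {A : Type} (C : SL2CrW A) : Prop extends IsCrystal C where
  counts_e : CountsIterates C.e C.ε
  counts_f : CountsIterates C.f C.φ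

section StandardCrystal

variable {l : ℕ}

theorem etB_eq_none_iff (b : Bel l) : etB b = none ↔ b.val.1 = 0 := by
  unfold etB; split_ifs <;> simp_all

theorem ftB_eq_none_iff (b : Bel l) : ftB b = none ↔ b.val.2 = 0 := by
  unfold ftB; split_ifs <;> simp_all

theorem Bel.ext_fst {b b' : Bel l} (h : b.val.1 = b'.val.1) : b = b' :=
  Subtype.ext (Prod.ext h (by have := b.2; have := b'.2; omega))

theorem ftB_of_etB_eq_some {b b' : Bel l} (h : etB b = some b') : ftB b' = some b := by
  unfold etB at h
  split_ifs at h with h0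
  cases h
  unfold ftB
  rw [dif_neg (Nat.succ_ne_zero _)]
  exact congrArg some (Bel.ext_fst (Nat.sub_add_cancel (Nat.pos_of_ne_zero h0)))

theorem fst_of_ftB_eq_some {b b' : Bel l} (h : ftB b = some b') : b'.val.1 = b.val.1 + 1 := by
  unfold ftB at h
  split_ifs at h
  cases h
  rfl

variable {lam : ℤ} (b : Bel l) (u : PUnit)

@[simp] theorem BT_e : (BT l lam).e (b, u) = (etB b).map (·, u) := by
  simp [BT, tensorW, Tcr, BelCrW]

@[simp] theorem BT_f : (BT l lam).f (b, u) = (ftB b).map (·, u) := by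
  simp [BT, tensorW, Tcr, BelCrW]

@[simp] theorem BT_ε : (BT l lam).ε (b, u) = (b.val.1 : ℤ) := by
  simp [BT, tensorW, Tcr, BelCrW]

@[simp] theorem BT_φ : (BT l lam).φ (b, u) = (b.val.2 + lam : ℤ) := by
  simp [BT, tensorW, Tcr, BelCrW]

@[simp] theorem BT_w : (BT l lam).w (b, u) = b.val.2 - b.val.1 + lam := by
  simp [BT, tensorW, Tcr, BelCrW]

end StandardCrystal

section HighestWeightString

variable {A : Type} {C : SL2CrW A} {c0 : A} {l : ℕ}

/-- `f̃^i c₀` at `x^i y^j`; the default value `c₀` is never used when `φ c₀ = l`. -/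
def fString (C : SL2CrW A) (c0 : A) (b : Bel l) : A := (iterOp C.f b.val.1 c0).getD c0

theorem iterOp_f_eq_fString (hC : IsSeminormal C) (hl : C.φ c0 = l) (b : Bel l) :
    iterOp C.f b.val.1 c0 = some (fString C c0 b) := by
  have hb := b.2
  have hφ : ¬ C.φ c0 < (b.val.1 : ℤ) := by
    rw [hl, not_lt]
    exact_mod_cast (by omega : b.val.1 ≤ l)
  obtain ⟨a, ha⟩ := Option.ne_none_iff_exists'.mp ((hC.counts_f c0 _).not.mpr hφ)
  simp [fString, ha]

theorem ε_φ_fString (hC : IsSeminormal C) (hc0 : C.e c0 = none) (hl : C.φ c0 = l) (b : Bel l) :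
    C.ε (fString C c0 b) = (b.val.1 : ℤ) ∧ C.φ (fString C c0 b) = (b.val.2 : ℤ) := by
  obtain ⟨hε, hφ⟩ := hC.ε_φ_of_iterOp_f_eq_some (iterOp_f_eq_fString hC hl b)
  obtain ⟨n, hn⟩ := hC.counts_f.exists_eq_natCast (fString C c0 b)
  rw [(hC.counts_e.eq_none_iff c0).mp hc0] at hε
  rw [hl, hn] at hφ
  have hb := b.2
  refine ⟨by simpa using hε, ?_⟩
  rw [hn]
  norm_cast at hφ ⊢
  omega

theorem f_fString (hC : IsSeminormal C) (hc0 : C.e c0 = none) (hl : C.φ c0 = l) (b : Bel l) :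
    C.f (fString C c0 b) = (ftB b).map (fString C c0) := by
  rcases hfb : ftB b with _ | b'
  · rw [Option.map_none, hC.counts_f.eq_none_iff, (ε_φ_fString hC hc0 hl b).2,
      (ftB_eq_none_iff b).mp hfb]
    rfl
  · rw [Option.map_some, ← iterOp_f_eq_fString hC hl b', fst_of_ftB_eq_some hfb,
      iterOp_succ_eq_bind, iterOp_f_eq_fString hC hl b, Option.bind_some]

theorem e_fString (hC : IsSeminormal C) (hc0 : C.e c0 = none) (hl : C.φ c0 = l) (b : Bel l) :
    C.e (fString C c0 b) = (etB b).map (fString C c0) := by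
  rcases heb : etB b with _ | b'
  · rw [Option.map_none, hC.counts_e.eq_none_iff, (ε_φ_fString hC hc0 hl b).1,
      (etB_eq_none_iff b).mp heb]
    rfl
  · rw [Option.map_some, ← hC.ef, f_fString hC hc0 hl, ftB_of_etB_eq_some heb,
      Option.map_some]

theorem fString_injective (hC : IsSeminormal C) (hc0 : C.e c0 = none) (hl : C.φ c0 = l) :
    Function.Injective (fString (l := l) C c0) := by
  intro b b' h
  have hε := congrArg C.ε h
  rw [(ε_φ_fString hC hc0 hl b).1, (ε_φ_fString hC hc0 hl b').1] at hε
  exact Bel.ext_fst (by exact_mod_cast hε)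

theorem fString_surjective (hC : IsSeminormal C) (hc0 : C.e c0 = none) (hl : C.φ c0 = l)
    (hconn : ∀ a, Relation.ReflTransGen (fun u v => C.f u = some v ∨ C.f v = some u) c0 a) :
    Function.Surjective (fString (l := l) C c0) := by
  intro a
  induction hconn a with
  | refl => exact ⟨⟨(0, l), zero_add l⟩, rfl⟩
  | tail _ huv ih =>
    obtain ⟨b, rfl⟩ := ih
    rcases huv with hf | hf
    · rw [f_fString hC hc0 hl] at hf
      obtain ⟨b', -, rfl⟩ := Option.map_eq_some_iff.mp hf
      exact ⟨b', rfl⟩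
    · rw [hC.ef, e_fString hC hc0 hl] at hf
      obtain ⟨b', -, rfl⟩ := Option.map_eq_some_iff.mp hf
      exact ⟨b', rfl⟩

end HighestWeightString

theorem stmt3_general {A : Type} [Nonempty A] (C : SL2CrW A) (hC : IsCrystal C)
    (hNe : ∀ (a : A) (n : ℕ), iterOp C.e n a = none ↔ C.ε a < (n : ℤ))
    (hNf : ∀ (a : A) (n : ℕ), iterOp C.f n a = none ↔ C.φ a < (n : ℤ))
    (hconn : ∀ a b : A,
      Relation.ReflTransGen (fun u v => C.f u = some v ∨ C.f v = some u) a b) :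
    ∃ (l : ℕ) (lam : ℤ) (e : A ≃ (Bel l × PUnit)) (c0 : A),
      (∀ a, Option.map e (C.e a) = (BT l lam).e (e a)) ∧
      (∀ a, Option.map e (C.f a) = (BT l lam).f (e a)) ∧
      (∀ a, C.ε a = (BT l lam).ε (e a)) ∧
      (∀ a, C.φ a = (BT l lam).φ (e a)) ∧
      (∀ a, C.w a = (BT l lam).w (e a)) ∧
      C.e c0 = none ∧
      (∀ b : Bel l, iterOp C.f b.val.1 c0 = some (e.symm (b, PUnit.unit))) := by
  have hN : IsSeminormal C := ⟨hC, hNe, hNf⟩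
  obtain ⟨c0, hc0⟩ := hN.counts_e.exists_eq_none (Classical.arbitrary A)
  obtain ⟨l, hl⟩ := hN.counts_f.exists_eq_natCast c0
  let s : Bel l ≃ A := Equiv.ofBijective (fString C c0) ⟨fString_injective hN hc0 hl,
    fString_surjective hN hc0 hl (hconn c0)⟩
  have hε_φ : ∀ b, C.ε (s b) = (b.val.1 : ℤ) ∧ C.φ (s b) = (b.val.2 : ℤ) :=
    ε_φ_fString hN hc0 hl
  have he : ∀ b, C.e (s b) = (etB b).map s := e_fString hN hc0 hl
  have hf : ∀ b, C.f (s b) = (ftB b).map s := f_fString hN hc0 hl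
  refine ⟨l, 0, s.symm.trans (Equiv.prodPUnit (Bel l)).symm, c0, ?_, ?_, ?_, ?_, ?_, hc0,
    iterOp_f_eq_fString hN hl⟩ <;> intro a <;> obtain ⟨b, rfl⟩ := s.surjective a
  · simp [he, Option.map_map, Function.comp_def]
  · simp [hf, Option.map_map, Function.comp_def]
  · simp [hε_φ]
  · simp [hε_φ]
  · simp [hC.w_eq_sub (hε_φ b).1 (hε_φ b).2]

/-- Every finite irreducible (connected) sl2-crystal (with `ε` and `φ`
counting the number of applications of `ẽ` resp. `f̃`, as for crystals of integrable
modules) is isomorphic to `B(l) ⊗ T_λ` for some `l ∈ ℕ`, `λ ∈ ℤ`, via an isomorphism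
sending `x^i y^{l−i} ⊗ t_λ` to `f̃^i c₀`, where `c₀` is the highest weight element. -/
theorem stmt3 {A : Type} [Finite A] [Nonempty A] (C : SL2CrW A) (hC : IsCrystal C)
    (hNe : ∀ (a : A) (n : ℕ), iterOp C.e n a = none ↔ C.ε a < (n : ℤ))
    (hNf : ∀ (a : A) (n : ℕ), iterOp C.f n a = none ↔ C.φ a < (n : ℤ))
    (hconn : ∀ a b : A,
      Relation.ReflTransGen (fun u v => C.f u = some v ∨ C.f v = some u) a b) :
    ∃ (l : ℕ) (lam : ℤ) (e : A ≃ (Bel l × PUnit)) (c0 : A),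
      (∀ a, Option.map e (C.e a) = (BT l lam).e (e a)) ∧
      (∀ a, Option.map e (C.f a) = (BT l lam).f (e a)) ∧
      (∀ a, C.ε a = (BT l lam).ε (e a)) ∧
      (∀ a, C.φ a = (BT l lam).φ (e a)) ∧
      (∀ a, C.w a = (BT l lam).w (e a)) ∧
      C.e c0 = none ∧
      (∀ b : Bel l, iterOp C.f b.val.1 c0 = some (e.symm (b, PUnit.unit))) :=
  stmt3_general C hC hNe hNf hconn
end

section
/- There is no counit ε : 𝓑 → B(0) making the comultiplication Δ on the sl2-crystal 𝓑 = ⨆_{n∈ℕ} B(n) ⊗ B(n)^∨, defined by Δ(b ⊗ b') = (b ⊗ y^n) ⊗ (x^n ⊗ b') for b ⊗ b' ∈ B(n) ⊗ B(n)^∨, into a counital coalgebra; i.e., no map ε of pointed sets satisfies (ε ⊗ id)∘Δ = id = (id ⊗ ε)∘Δ under the canonical identifications. -/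
/-- The underlying pointed set of `𝓑 = ⨆_{n∈ℕ} B(n) ⊗ B(n)^∨`: pairs `(b, b')` with
`b ∈ B(n)` and `b' ∈ B(n)^∨` (identified with `B(n)` via `(x^i y^j)^∨ ↦ x^j y^i`). -/
def BB : Type := {p : (ℕ × ℕ) × (ℕ × ℕ) // p.1.1 + p.1.2 = p.2.1 + p.2.2}

def deg (q : BB) : ℕ := q.val.1.1 + q.val.1.2

/-- First output of the comultiplication: `b ⊗ b' ↦ b ⊗ y^n` (the dual of the lowest
weight element `x^n` of `B(n)` is stored as `y^n`). -/
def d1 (q : BB) : BB := ⟨(q.val.1, (0, deg q)), by simp only [deg]; omega⟩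

/-- Second output of the comultiplication: `b ⊗ b' ↦ x^n ⊗ b'`. -/
def d2 (q : BB) : BB := ⟨((deg q, 0), q.val.2), by have := q.2; simp only [deg]; omega⟩

/-- The comultiplication `Δ(b ⊗ b') = (b ⊗ y^n) ⊗ (x^n ⊗ b')` on `𝓑`. -/
def DeltaBB (q : BB) : BB × BB := (d1 q, d2 q)

/-
The left counit identity alone is contradictory: `(ε ⊗ id) ∘ Δ` sends `b ⊗ b'` either to `0`
or to `x^n ⊗ b'`, so it can be the identity only if every `b ∈ B(n)` were the lowest weight
element `x^n`, which fails already for `b = y ∈ B(1)`.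
-/

lemma eq_of_map_const_eq_some {α β : Type*} {o : Option α} {b c : β}
    (h : o.map (fun _ => b) = some c) : b = c := by
  obtain ⟨_, -, rfl⟩ := Option.map_eq_some_iff.1 h
  rfl

lemma val_fst_snd_eq_zero_of_d2_eq_self {q : BB} (h : d2 q = q) : q.val.1.2 = 0 :=
  (congrArg (fun r : BB => r.val.1.2) h).symm

/-- There is no counit `ε : 𝓑 → B(0)` (a map of pointed sets
`ε : BB → Option Unit`) making `Δ` counital, i.e. satisfying
`(ε ⊗ id) ∘ Δ = id = (id ⊗ ε) ∘ Δ` under the canonical identifications. -/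
theorem stmt8 :
    ¬ ∃ ε : BB → Option Unit,
      ∀ q : BB,
        (ε (DeltaBB q).1).map (fun _ => (DeltaBB q).2) = some q ∧
        (ε (DeltaBB q).2).map (fun _ => (DeltaBB q).1) = some q := by
  rintro ⟨ε, hε⟩
  let q : BB := ⟨((0, 1), (1, 0)), rfl⟩
  exact one_ne_zero (val_fst_snd_eq_zero_of_d2_eq_self (eq_of_map_const_eq_some (hε q).1))
end

section
/- If C is a comodule over the crystal coalgebra 𝓑 in pointed sets, then for every nonzero c ∈ C there exist n ∈ ℕ, b ∈ B(n), and c' ∈ C such that Δ_C(c) = (b ⊗ x^n-dual) ⊗ c' and Δ_C(c') = (y^n ⊗ x^n-dual) ⊗ c'; consequently every nonzero subcomodule of C contains a singleton subcomodule {c'} with Δ_C(c') = (u_n ⊗ u_{−n}) ⊗ c'. -/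
/-- If `C` is a comodule over the crystal coalgebra `𝓑` in pointed sets
(a coaction `d : C → 𝓑 × C`, necessarily nonzero on nonzero elements, satisfying
coassociativity), then for every nonzero `c ∈ C` there are `n ∈ ℕ`, `b ∈ B(n)` and
`c' ∈ C` with `d c = (b ⊗ u_{−n}) ⊗ c'` and `d c' = (u_n ⊗ u_{−n}) ⊗ c'`; consequently
every nonempty subcomodule of `C` contains a singleton subcomodule `{c'}` with
`d c' = (u_n ⊗ u_{−n}) ⊗ c'`. -/
theorem stmt10 {C : Type} (d : C → BB × C)
    (hco : ∀ c : C,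
      ((DeltaBB (d c).1).1, (DeltaBB (d c).1).2, (d c).2) =
      ((d c).1, (d ((d c).2)).1, (d ((d c).2)).2)) :
    (∀ c : C, ∃ (n : ℕ) (b : ℕ × ℕ) (c' : C), b.1 + b.2 = n ∧
      (d c).1.val = (b, (0, n)) ∧ (d c).2 = c' ∧
      (d c').1.val = ((n, 0), (0, n)) ∧ (d c').2 = c') ∧
    (∀ S : Set C, (∀ c ∈ S, (d c).2 ∈ S) → S.Nonempty →
      ∃ c' ∈ S, ∃ n : ℕ, (d c').1.val = ((n, 0), (0, n)) ∧ (d c').2 = c') := by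
  have key : ∀ c : C, ∃ (n : ℕ) (b : ℕ × ℕ) (c' : C), b.1 + b.2 = n ∧
      (d c).1.val = (b, (0, n)) ∧ (d c).2 = c' ∧
      (d c').1.val = ((n, 0), (0, n)) ∧ (d c').2 = c' := by
    intro c
    have h := hco c
    rw [Prod.mk.injEq, Prod.mk.injEq] at h
    obtain ⟨h1, h2, h3⟩ := h
    simp only [DeltaBB] at h1 h2
    refine ⟨deg (d c).1, (d c).1.val.1, (d c).2, rfl, ?_, rfl, ?_, h3.symm⟩
    · have := congrArg Subtype.val h1
      simpa [d1] using this.symm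
    · have := congrArg Subtype.val h2
      have h1' := congrArg Subtype.val h1
      simp only [d1] at h1'
      have hv2 : (d c).1.val.2 = (0, deg (d c).1) := by
        have := congrArg Prod.snd h1'
        exact this.symm
      simp only [d2, hv2] at this
      exact this.symm
  refine ⟨key, fun S hS ⟨c, hc⟩ => ?_⟩
  obtain ⟨n, b, c', _, _, hc2, hd1, hd2⟩ := key c
  exact ⟨c', hc2 ▸ hS c hc, n, hd1, hd2⟩
end

section
/- For sl2, in the bialgebra 𝔹 generated by a = x ⊗ x^∨, b = y ⊗ x^∨, c = x ⊗ y^∨, d = y ⊗ y^∨ ∈ 𝔹(1) ⊗ 𝔹(−1), the relations cb = bc = db = dc = ba = ca = 0 and da = 1 hold, and the basis elements satisfy x^i y^j ⊗ (x^r y^s)^∨ = a^r c^{i−r} d^j when i ≥ r and = a^i b^{r−i} d^s when i ≤ r. -/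
/-- The basis of the sl2 crystal bialgebra `𝔹 = ⊕_n ℤB(n) ⊗ ℤB(n)^∨`: pairs
`x^i y^j ⊗ (x^r y^s)^∨` with `i + j = r + s`. -/
def PB : Type := {p : (ℕ × ℕ) × (ℕ × ℕ) // p.1.1 + p.1.2 = p.2.1 + p.2.2}

/-- Index of the Clebsch–Gordan component of `B(n) ⊗ B(m)` containing `u ⊗ v`. -/
def comp16 (u v : ℕ × ℕ) : ℕ := min u.2 v.1

/-- The element `u·v`: the image of `u ⊗ v` under the identification of its
Clebsch–Gordan component with `B(n+m−2k)`. -/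
def pelt (u v : ℕ × ℕ) : ℕ × ℕ :=
  if v.1 ≤ u.2 then (u.1, u.1 + u.2 + v.1 + v.2 - 2 * min u.2 v.1 - u.1)
  else (u.1 + v.1 - u.2, u.1 + u.2 + v.1 + v.2 - 2 * min u.2 v.1 - (u.1 + v.1 - u.2))

lemma pelt_sum (u v : ℕ × ℕ) :
    (pelt u v).1 + (pelt u v).2 = u.1 + u.2 + v.1 + v.2 - 2 * min u.2 v.1 := by
  unfold pelt; split_ifs <;> simp <;> omega

/-- The product of basis elements of `𝔹`:
`(u ⊗ u')·(v ⊗ v') = (u·v) ⊗ (v'·u')` when `u·v` and `(v'·u')^∨` lie in the same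
irreducible component (equivalently, the component indices agree), and `0` otherwise. -/
def pmul16 (X Y : PB) : Option PB :=
  if h : comp16 X.val.1 Y.val.1 = comp16 X.val.2 Y.val.2 then
    some ⟨(pelt X.val.1 Y.val.1, pelt X.val.2 Y.val.2), by
      rw [pelt_sum, pelt_sum]
      have hX := X.2; have hY := Y.2
      simp only [comp16] at h
      omega⟩
  else none

def one16 : PB := ⟨((0, 0), (0, 0)), rfl⟩
/-- `a = x ⊗ x^∨`. -/
def a16 : PB := ⟨((1, 0), (1, 0)), rfl⟩
/-- `b = y ⊗ x^∨`. -/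
def b16 : PB := ⟨((0, 1), (1, 0)), rfl⟩
/-- `c = x ⊗ y^∨`. -/
def c16 : PB := ⟨((1, 0), (0, 1)), rfl⟩
/-- `d = y ⊗ y^∨`. -/
def d16 : PB := ⟨((0, 1), (0, 1)), rfl⟩

/-- Product of a list of basis elements (with unit seed), `0`-absorbing. -/
def listProd (l : List PB) : Option PB :=
  l.foldl (fun acc x => acc.bind (fun u => pmul16 u x)) (some one16)

/-!
The Clebsch–Gordan product of monomials is the bicyclic monoid `⟨x, y | y x = 1⟩`:
`x^i y^j · x^k y^l = x^(i + (k - j)) y^((j - k) + l)` with truncated subtraction, landing in the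
component of index `min j k`. Right multiplication by `a`, `c`, `b`, `d` on basis elements with
no `y` in the appropriate slots always lands in component `0` on both sides, so the words
`a^r c^(i-r) d^j` and `a^i b^(r-i) d^s` are computed one letter at a time: `a` raises both
`x`-exponents, `c` the left `x` and the right `y`, `b` the left `y` and the right `x`, and `d`
both `y`-exponents.
-/

lemma pelt_eq (u v : ℕ × ℕ) : pelt u v = (u.1 + (v.1 - u.2), u.2 - v.1 + v.2) := by
  unfold pelt
  split_ifs <;> ext <;> simp only <;> omega

lemma map_val_pmul16 (X Y : PB) :
    (pmul16 X Y).map Subtype.val =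
      if comp16 X.val.1 Y.val.1 = comp16 X.val.2 Y.val.2 then
        some (pelt X.val.1 Y.val.1, pelt X.val.2 Y.val.2)
      else none := by
  unfold pmul16
  split_ifs <;> rfl

section RightMultiplication

variable {X : PB} {i j r s : ℕ}

lemma map_val_pmul16_a16 (hX : X.val = ((i, 0), (r, 0))) :
    (pmul16 X a16).map Subtype.val = some ((i + 1, 0), (r + 1, 0)) := by
  rw [map_val_pmul16, hX]
  simp [comp16, a16, pelt_eq]

lemma map_val_pmul16_c16 (hX : X.val = ((i, 0), (r, s))) :
    (pmul16 X c16).map Subtype.val = some ((i + 1, 0), (r, s + 1)) := by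
  rw [map_val_pmul16, hX]
  simp [comp16, c16, pelt_eq]

lemma map_val_pmul16_b16 (hX : X.val = ((i, j), (r, 0))) :
    (pmul16 X b16).map Subtype.val = some ((i, j + 1), (r + 1, 0)) := by
  rw [map_val_pmul16, hX]
  simp [comp16, b16, pelt_eq]

lemma map_val_pmul16_d16 (hX : X.val = ((i, j), (r, s))) :
    (pmul16 X d16).map Subtype.val = some ((i, j + 1), (r, s + 1)) := by
  rw [map_val_pmul16, hX]
  simp [comp16, d16, pelt_eq]

end RightMultiplication

lemma listProd_append_singleton (l : List PB) (g : PB) :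
    listProd (l ++ [g]) = (listProd l).bind (fun X => pmul16 X g) := by
  simp only [listProd, List.foldl_append, List.foldl_cons, List.foldl_nil]

lemma map_val_listProd_append_replicate {g : PB} {P : ℕ → (ℕ × ℕ) × (ℕ × ℕ)}
    (hstep : ∀ k (X : PB), X.val = P k → (pmul16 X g).map Subtype.val = some (P (k + 1)))
    {l : List PB} (hl : (listProd l).map Subtype.val = some (P 0)) (n : ℕ) :
    (listProd (l ++ List.replicate n g)).map Subtype.val = some (P n) := by
  induction n with
  | zero => simpa using hl
  | succ n ih =>
    obtain ⟨X, hX, hXval⟩ := Option.map_eq_some_iff.mp ih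
    rw [List.replicate_succ', ← List.append_assoc, listProd_append_singleton, hX]
    exact hstep n X hXval

lemma map_val_listProd_replicate_a16 (n : ℕ) :
    (listProd (List.replicate n a16)).map Subtype.val = some ((n, 0), (n, 0)) :=
  map_val_listProd_append_replicate (P := fun k => ((k, 0), (k, 0)))
    (fun _ _ hX => map_val_pmul16_a16 hX) (l := []) rfl n

lemma listProd_eq_of_map_val {l : List PB} {X : PB}
    (h : (listProd l).map Subtype.val = some X.val) :
    listProd l = some X :=
  Option.map_injective Subtype.val_injective h

/-- In the sl2 crystal bialgebra `𝔹`, the generators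
`a = x ⊗ x^∨`, `b = y ⊗ x^∨`, `c = x ⊗ y^∨`, `d = y ⊗ y^∨` satisfy
`cb = bc = db = dc = ba = ca = 0` and `da = 1`, and the basis elements satisfy
`x^i y^j ⊗ (x^r y^s)^∨ = a^r c^{i−r} d^j` when `i ≥ r` and
`x^i y^j ⊗ (x^r y^s)^∨ = a^i b^{r−i} d^s` when `i ≤ r`. -/
theorem stmt16 :
    pmul16 c16 b16 = none ∧ pmul16 b16 c16 = none ∧ pmul16 d16 b16 = none ∧
    pmul16 d16 c16 = none ∧ pmul16 b16 a16 = none ∧ pmul16 c16 a16 = none ∧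
    pmul16 d16 a16 = some one16 ∧
    (∀ (i j r s : ℕ) (hsum : i + j = r + s), r ≤ i →
      listProd (List.replicate r a16 ++ List.replicate (i - r) c16 ++ List.replicate j d16)
        = some ⟨((i, j), (r, s)), hsum⟩) ∧
    (∀ (i j r s : ℕ) (hsum : i + j = r + s), i ≤ r →
      listProd (List.replicate i a16 ++ List.replicate (r - i) b16 ++ List.replicate s d16)
        = some ⟨((i, j), (r, s)), hsum⟩) := by
  -- In each of the six vanishing products the two component indices are `0` and `1`.
  refine ⟨rfl, rfl, rfl, rfl, rfl, rfl, rfl, ?_, ?_⟩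
  · intro i j r s hsum hri
    have hac := map_val_listProd_append_replicate (P := fun k => ((r + k, 0), (r, k)))
      (fun _ _ hX => map_val_pmul16_c16 hX) (map_val_listProd_replicate_a16 r) (i - r)
    have hacd := map_val_listProd_append_replicate (P := fun k => ((r + (i - r), k), (r, i - r + k)))
      (fun _ _ hX => map_val_pmul16_d16 hX) hac j
    apply listProd_eq_of_map_val
    rw [hacd, Nat.add_sub_cancel' hri, show i - r + j = s by omega]
  · intro i j r s hsum hir
    have hab := map_val_listProd_append_replicate (P := fun k => ((i, k), (i + k, 0)))
      (fun _ _ hX => map_val_pmul16_b16 hX) (map_val_listProd_replicate_a16 i) (r - i)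
    have habd := map_val_listProd_append_replicate (P := fun k => ((i, r - i + k), (i + (r - i), k)))
      (fun _ _ hX => map_val_pmul16_d16 hX) hab s
    apply listProd_eq_of_map_val
    rw [habd, Nat.add_sub_cancel' hir, show r - i + s = j by omega]
end

section
/- The non-unital algebra U̇₀ = ⊕_{α∈Φ₊} 𝔹(α) ⊗ 𝔹(−α) (inside 𝔹^∨) is generated as an algebra by the elements ẽ_{α,i} = Σ_{b∈B(α)} (ẽᵢb ⊗ b^∨)^ and f̃_{α,i} = Σ_{b∈B(α)} (f̃ᵢb ⊗ b^∨)^ together with the idempotents 1_α = Σ_{b∈B(α)} (b ⊗ b^∨)^; in particular (b_α ⊗ b_α^∨)^ = Π_{i∈I} (1_α − f̃_{α,i} ẽ_{α,i}) where b_α is the highest weight element, and any basis functional (b ⊗ b'^∨)^ with b = f̃_{i₁}…f̃_{iₙ} b_α, b' = f̃_{j₁}…f̃_{jₘ} b_α equals f̃_{α,i₁}…f̃_{α,iₙ} (Π_{i}(1_α − f̃_{α,i} ẽ_{α,i})) ẽ_{α,j₁}…ẽ_{α,jₘ}. -/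
section

/- Crystal data of the irreducible highest weight crystals `B(α)` with Kashiwara
operators `eOp i`, `fOp i` and highest weight elements `bA α ∈ B(α)`. -/
variable {Φp ι : Type} [DecidableEq Φp] (B : Φp → Type)
  [∀ α, Fintype (B α)] [∀ α, DecidableEq (B α)]
  (eOp fOp : ι → (α : Φp) → B α → Option (B α))
  (bA : (α : Φp) → B α)

/-- The basis of `𝔹`: elements `(b ⊗ b'^∨)` with `b, b' ∈ B(α)`. -/
def P : Type _ := Σ α : Φp, B α × B α

/-- `U̇₀ = ⊕_{α∈Φ₊} 𝔹(α) ⊗ 𝔹(−α)` (finitely supported formal sums of basis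
functionals `(b ⊗ b'^∨)^`). -/
abbrev UD : Type _ := P B →₀ ℤ

/-- Product of two basis functionals:
`(b ⊗ d^∨)^ · (d ⊗ b')^ = (b ⊗ b')^` within the same `α`-block, else `0`. -/
noncomputable def pairMulF (x y : P B) : UD B :=
  if h : x.1 = y.1 then
    (if (h ▸ x.2.2 : B y.1) = y.2.1 then
      Finsupp.single (⟨y.1, ((h ▸ x.2.1 : B y.1), y.2.2)⟩ : P B) 1 else 0)
  else 0

/-- The multiplication of `U̇₀`. -/
noncomputable def mulU (u v : UD B) : UD B :=
  u.sum fun x a => v.sum fun y c => (a * c) • pairMulF B x y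

/-- The local units `1_α = Σ_{b∈B(α)} (b ⊗ b^∨)^`. -/
noncomputable def oneA (α : Φp) : UD B := ∑ b : B α, Finsupp.single (⟨α, (b, b)⟩ : P B) 1

/-- `ẽ_{α,i} = Σ_{b∈B(α)} (ẽᵢ b ⊗ b^∨)^`. -/
noncomputable def eGen (α : Φp) (i : ι) : UD B :=
  ∑ b : B α, (eOp i α b).elim 0 (fun c => Finsupp.single (⟨α, (c, b)⟩ : P B) 1)

/-- `f̃_{α,i} = Σ_{b∈B(α)} (f̃ᵢ b ⊗ b^∨)^`. -/
noncomputable def fGen (α : Φp) (i : ι) : UD B :=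
  ∑ b : B α, (fOp i α b).elim 0 (fun c => Finsupp.single (⟨α, (c, b)⟩ : P B) 1)

/-- `f̃`-words applied with the rightmost letter first, so that
`wordR [i₁,…,iₙ] b = f̃_{i₁}(f̃_{i₂}(⋯ f̃_{iₙ}(b)))`. -/
def wordR (α : Φp) (l : List ι) (b : B α) : Option (B α) :=
  l.foldr (fun i ob => ob.bind (fOp i α)) (some b)

/-- `f̃`-words applied with the leftmost letter first. -/
def wordL (α : Φp) (l : List ι) (b : B α) : Option (B α) :=
  l.foldl (fun ob i => ob.bind (fOp i α)) (some b)

/-! The elements `ẽ_{α,i}`, `f̃_{α,i}`, `1_α` and every basis functional are matrices of partial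
maps on `B(α)`, and the product of two such matrices is the matrix of the composite partial map.
Since `ẽᵢ` and `f̃ᵢ` are mutually inverse partial maps, `f̃_{α,i}ẽ_{α,i}` is the diagonal
projection onto the elements not killed by `ẽᵢ`; so `1_α − f̃_{α,i}ẽ_{α,i}` projects onto `ker ẽᵢ`
and the product over all `i` onto the highest weight element `b_α`. Composing with an `f̃`-word
on the left and an `ẽ`-word on the right moves the two legs of `(b_α ⊗ b_α^∨)^` to arbitrary
`b, b'`, because `ẽ_{j₁} ⋯ ẽ_{jₘ}` sends `c` to `b_α` exactly when `c = f̃_{jₘ} ⋯ f̃_{j₁} b_α`. -/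

section PartialMaps

variable {β : Type*}

/-- `partialComp [g₁, …, gₙ] = g₁ ∘ ⋯ ∘ gₙ` as partial maps. -/
def partialComp (gs : List (β → Option β)) (b : β) : Option β :=
  gs.foldr (fun g ob => ob.bind g) (some b)

@[simp]
lemma partialComp_nil : partialComp ([] : List (β → Option β)) = some := rfl

@[simp]
lemma partialComp_cons (g : β → Option β) (gs : List (β → Option β)) :
    partialComp (g :: gs) = fun b => (partialComp gs b).bind g := rfl

lemma partialComp_map_guard {κ : Type*} (p : κ → β → Prop) [∀ i b, Decidable (p i b)]
    (l : List κ) (b : β) :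
    partialComp (l.map fun i b => if p i b then some b else none) b
      = if ∀ i ∈ l, p i b then some b else none := by
  induction l with
  | nil => simp
  | cons i l ih =>
    simp only [List.map_cons, partialComp_cons, ih, List.forall_mem_cons]
    split_ifs <;> simp_all

end PartialMaps

section Multiplication

variable {B}

omit [∀ α, Fintype (B α)]

lemma zero_mulU (v : UD B) : mulU B 0 v = 0 := by simp [mulU]

lemma mulU_zero (u : UD B) : mulU B u 0 = 0 := by simp [mulU]

lemma add_mulU (u u' v : UD B) : mulU B (u + u') v = mulU B u v + mulU B u' v := by
  unfold mulU
  rw [Finsupp.sum_add_index']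
  · simp
  · intro x a a'
    simp [add_mul, add_smul, Finsupp.sum_add]

lemma mulU_add (u v v' : UD B) : mulU B u (v + v') = mulU B u v + mulU B u v' := by
  unfold mulU
  rw [← Finsupp.sum_add]
  refine Finsupp.sum_congr fun x _ => ?_
  rw [Finsupp.sum_add_index']
  · simp
  · intro y c c'
    simp [mul_add, add_smul]

lemma sum_mulU {γ : Type*} (s : Finset γ) (f : γ → UD B) (v : UD B) :
    mulU B (∑ g ∈ s, f g) v = ∑ g ∈ s, mulU B (f g) v :=
  map_sum (AddMonoidHom.mk' (mulU B · v) fun u u' => add_mulU u u' v) f s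

lemma mulU_sum {γ : Type*} (u : UD B) (s : Finset γ) (f : γ → UD B) :
    mulU B u (∑ g ∈ s, f g) = ∑ g ∈ s, mulU B u (f g) :=
  map_sum (AddMonoidHom.mk' (mulU B u) (mulU_add u)) f s

lemma single_mulU_single (α : Φp) (b d d' b' : B α) :
    mulU B (Finsupp.single (⟨α, (b, d)⟩ : P B) 1) (Finsupp.single (⟨α, (d', b')⟩ : P B) 1)
      = if d = d' then Finsupp.single (⟨α, (b, b')⟩ : P B) 1 else 0 := by
  unfold mulU
  erw [Finsupp.sum_single_index, Finsupp.sum_single_index]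
  · simp [pairMulF]
    rfl
  · simp
  · simp

end Multiplication

section Matrices

variable {B} {eOp fOp}

/-- The matrix `Σ_b (g b ⊗ b^∨)^` of a partial map `g` on `B(α)`. -/
noncomputable def ofPartialMap (α : Φp) (g : B α → Option (B α)) : UD B :=
  ∑ b : B α, (g b).elim 0 (fun c => Finsupp.single (⟨α, (c, b)⟩ : P B) 1)

omit [DecidableEq Φp] [∀ α, DecidableEq (B α)] in
lemma oneA_eq_ofPartialMap (α : Φp) : oneA B α = ofPartialMap α some := rfl

omit [DecidableEq Φp] [∀ α, DecidableEq (B α)] in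
lemma eGen_eq_ofPartialMap (α : Φp) :
    eGen B eOp α = fun i => ofPartialMap α (eOp i α) := rfl

omit [DecidableEq Φp] [∀ α, DecidableEq (B α)] in
lemma fGen_eq_ofPartialMap (α : Φp) :
    fGen B fOp α = fun i => ofPartialMap α (fOp i α) := rfl

omit [DecidableEq Φp] in
lemma single_eq_ofPartialMap (α : Φp) (c d : B α) :
    Finsupp.single (⟨α, (c, d)⟩ : P B) 1
      = ofPartialMap α (fun b => if b = d then some c else none) := by
  rw [ofPartialMap, Finset.sum_eq_single d]
  · simp
    rfl
  · intro b _ hb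
    simp [hb]
  · simp

lemma ofPartialMap_mulU_single (α : Φp) (g : B α → Option (B α)) (c b' : B α) :
    mulU B (ofPartialMap α g) (Finsupp.single (⟨α, (c, b')⟩ : P B) 1)
      = (g c).elim 0 (fun d => Finsupp.single (⟨α, (d, b')⟩ : P B) 1) := by
  rw [ofPartialMap, sum_mulU, Finset.sum_eq_single c]
  · cases g c
    · exact zero_mulU _
    · simp [single_mulU_single]
      rfl
  · intro b _ hb
    cases g b
    · exact zero_mulU _
    · simp [single_mulU_single, hb]
      rfl
  · simp

lemma ofPartialMap_mulU_ofPartialMap (α : Φp) (g h : B α → Option (B α)) :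
    mulU B (ofPartialMap α g) (ofPartialMap α h)
      = ofPartialMap α (fun b => (h b).bind g) := by
  rw [ofPartialMap.eq_1 α h, mulU_sum]
  refine Finset.sum_congr rfl fun b _ => ?_
  beta_reduce
  cases h b with
  | none => exact mulU_zero (B := B) _
  | some c => exact ofPartialMap_mulU_single α g c b

lemma foldr_mulU_ofPartialMap {κ : Type*} (α : Φp) (l : List κ) (g : κ → B α → Option (B α))
    (k : B α → Option (B α)) :
    (l.map fun i => ofPartialMap α (g i)).foldr (mulU B) (ofPartialMap α k)
      = ofPartialMap α (fun b => (k b).bind (partialComp (l.map g))) := by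
  induction l with
  | nil => simp
  | cons i l ih =>
    simp only [List.map_cons, List.foldr_cons, ih, ofPartialMap_mulU_ofPartialMap,
      partialComp_cons, Option.bind_assoc]

lemma foldl_mulU_ofPartialMap {κ : Type*} (α : Φp) (l : List κ) (g : κ → B α → Option (B α))
    (k : B α → Option (B α)) :
    (l.map fun i => ofPartialMap α (g i)).foldl (mulU B) (ofPartialMap α k)
      = ofPartialMap α (fun b => (partialComp (l.map g) b).bind k) := by
  induction l generalizing k with
  | nil => simp
  | cons i l ih =>
    simp only [List.map_cons, List.foldl_cons, ofPartialMap_mulU_ofPartialMap, ih,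
      partialComp_cons, Option.bind_assoc]

omit [DecidableEq Φp] [∀ α, DecidableEq (B α)] in
lemma oneA_sub_ofPartialMap (α : Φp) (p : B α → Prop) [DecidablePred p] :
    oneA B α - ofPartialMap α (fun b => if p b then none else some b)
      = ofPartialMap α (fun b => if p b then some b else none) := by
  rw [oneA_eq_ofPartialMap, ofPartialMap, ofPartialMap, ofPartialMap, ← Finset.sum_sub_distrib]
  refine Finset.sum_congr rfl fun b _ => ?_
  split_ifs <;> simp

end Matrices

section Words

variable {B} {eOp fOp}

omit [DecidableEq Φp] [∀ α, Fintype (B α)] [∀ α, DecidableEq (B α)]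

lemma wordR_eq_partialComp (α : Φp) (l : List ι) :
    wordR B fOp α l = partialComp (l.map (fOp · α)) := by
  funext b
  simp [wordR, partialComp, List.foldr_map]

lemma foldl_bind_eq_some_iff
    (hEF : ∀ (i : ι) (α : Φp) (b c : B α), fOp i α b = some c ↔ eOp i α c = some b)
    (α : Φp) (l : List ι) (ob : Option (B α)) (c : B α) :
    l.foldl (fun ob i => ob.bind (fOp i α)) ob = some c
      ↔ ∃ b, ob = some b ∧ wordR B eOp α l c = some b := by
  induction l generalizing ob with
  | nil => simp [wordR]
  | cons i l ih =>
    simp only [List.foldl_cons, ih, Option.bind_eq_some_iff, wordR, List.foldr_cons, hEF]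
    aesop

lemma wordL_eq_some_iff
    (hEF : ∀ (i : ι) (α : Φp) (b c : B α), fOp i α b = some c ↔ eOp i α c = some b)
    (α : Φp) (l : List ι) (b c : B α) :
    wordL B fOp α l b = some c ↔ wordR B eOp α l c = some b := by
  simp [wordL, foldl_bind_eq_some_iff hEF]

end Words

section Generation

variable {B} {eOp fOp bA}

lemma oneA_sub_fGen_mulU_eGen
    (hEF : ∀ (i : ι) (α : Φp) (b c : B α), fOp i α b = some c ↔ eOp i α c = some b)
    (α : Φp) (i : ι) :
    oneA B α - mulU B (fGen B fOp α i) (eGen B eOp α i)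
      = ofPartialMap α (fun b => if eOp i α b = none then some b else none) := by
  have hfe : (fun b => (eOp i α b).bind (fOp i α))
      = fun b => if eOp i α b = none then none else some b := by
    funext b
    cases hb : eOp i α b with
    | none => rfl
    | some c => simp [(hEF i α c b).mpr hb]
  rw [fGen_eq_ofPartialMap, eGen_eq_ofPartialMap, ofPartialMap_mulU_ofPartialMap, hfe,
    oneA_sub_ofPartialMap]

lemma foldl_oneA_sub_fGen_mulU_eGen
    (hEF : ∀ (i : ι) (α : Φp) (b c : B α), fOp i α b = some c ↔ eOp i α c = some b)
    (hHigh : ∀ (α : Φp) (b : B α), (∀ i, eOp i α b = none) ↔ b = bA α)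
    (α : Φp) (l : List ι) (hl : ∀ i, i ∈ l) :
    (l.map (fun i => oneA B α - mulU B (fGen B fOp α i) (eGen B eOp α i))).foldl
        (mulU B) (oneA B α)
      = Finsupp.single (⟨α, (bA α, bA α)⟩ : P B) 1 := by
  have hkilled (b : B α) : (∀ i ∈ l, eOp i α b = none) ↔ b = bA α := by
    simpa [hl] using hHigh α b
  rw [List.map_congr_left fun i _ => oneA_sub_fGen_mulU_eGen hEF α i, oneA_eq_ofPartialMap,
    foldl_mulU_ofPartialMap, single_eq_ofPartialMap]
  congr 1
  funext b
  rw [partialComp_map_guard, Option.bind_fun_some]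
  by_cases hb : b = bA α <;> simp [hkilled, hb]

lemma single_eq_foldr_fGen_eGen
    (hEF : ∀ (i : ι) (α : Φp) (b c : B α), fOp i α b = some c ↔ eOp i α c = some b)
    (α : Φp) (l l' : List ι) (b b' : B α)
    (hb : wordR B fOp α l (bA α) = some b) (hb' : wordL B fOp α l' (bA α) = some b') :
    Finsupp.single (⟨α, (b, b')⟩ : P B) 1 =
      (l.map (fGen B fOp α) ++ ([Finsupp.single (⟨α, (bA α, bA α)⟩ : P B) 1] : List (UD B))
          ++ l'.map (eGen B eOp α)).foldr (mulU B) (oneA B α) := by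
  have hraise (c : B α) :
      (wordR B eOp α l' c).bind (fun d => if d = bA α then some (bA α) else none)
        = if c = b' then some (bA α) else none := by
    have : wordR B eOp α l' c = some (bA α) ↔ c = b' := by
      rw [← wordL_eq_some_iff hEF, hb', Option.some_inj, eq_comm]
    cases h : wordR B eOp α l' c <;> aesop
  rw [List.foldr_append, List.foldr_append, List.foldr_cons, List.foldr_nil, fGen_eq_ofPartialMap,
    eGen_eq_ofPartialMap, oneA_eq_ofPartialMap, foldr_mulU_ofPartialMap, single_eq_ofPartialMap]
  -- inside the list the functional is typed as `UD B`, outside as `(Σ α, B α × B α) →₀ ℤ`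
  erw [single_eq_ofPartialMap, ofPartialMap_mulU_ofPartialMap, foldr_mulU_ofPartialMap]
  congr 1
  funext c
  rw [Option.bind_some, ← wordR_eq_partialComp, ← wordR_eq_partialComp, hraise]
  split_ifs <;> simp [hb]

end Generation

/-- The non-unital algebra `U̇₀` is generated by the elements
`ẽ_{α,i}`, `f̃_{α,i}` and the idempotents `1_α`: the highest weight functional satisfies
`(b_α ⊗ b_α^∨)^ = Π_{i∈I} (1_α − f̃_{α,i} ẽ_{α,i})` (for any ordering of `I`), and every
basis functional `(b ⊗ b'^∨)^` with `b, b'` given by `f̃`-words applied to `b_α` is the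
corresponding product of the `f̃_{α,i}`, this projection, and the `ẽ_{α,j}`; hence every
basis functional is such a product.  (The hypotheses record that `f̃ᵢ` and `ẽᵢ` are
mutually inverse partial maps, that `b_α` is the unique element killed by all `ẽᵢ`, and
that `B(α)` is generated from `b_α` by the `f̃ᵢ`.) -/
theorem stmt19
    (hEF : ∀ (i : ι) (α : Φp) (b c : B α), fOp i α b = some c ↔ eOp i α c = some b)
    (hHigh : ∀ (α : Φp) (b : B α), (∀ i, eOp i α b = none) ↔ b = bA α)
    (hConn : ∀ (α : Φp) (b : B α), ∃ l : List ι, wordR B fOp α l (bA α) = some b) :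
    (∀ (α : Φp) (l : List ι), l.Nodup → (∀ i : ι, i ∈ l) →
      (l.map (fun i => oneA B α - mulU B (fGen B fOp α i) (eGen B eOp α i))).foldl
          (mulU B) (oneA B α)
        = Finsupp.single (⟨α, (bA α, bA α)⟩ : P B) 1) ∧
    (∀ (α : Φp) (l l' : List ι) (b b' : B α),
      wordR B fOp α l (bA α) = some b → wordL B fOp α l' (bA α) = some b' →
      Finsupp.single (⟨α, (b, b')⟩ : P B) 1 =
        (l.map (fGen B fOp α) ++ ([Finsupp.single (⟨α, (bA α, bA α)⟩ : P B) 1] : List (UD B))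
            ++ l'.map (eGen B eOp α)).foldr (mulU B) (oneA B α)) ∧
    (∀ x : P B, ∃ l l' : List ι,
      Finsupp.single x 1 =
        (l.map (fGen B fOp x.1) ++ ([Finsupp.single (⟨x.1, (bA x.1, bA x.1)⟩ : P B) 1] : List (UD B))
            ++ l'.map (eGen B eOp x.1)).foldr (mulU B) (oneA B x.1)) := by
  refine ⟨fun α l _ hl => foldl_oneA_sub_fGen_mulU_eGen hEF hHigh α l hl,
    fun α l l' b b' => single_eq_foldr_fGen_eGen hEF α l l' b b', ?_⟩
  rintro ⟨α, b, b'⟩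
  obtain ⟨l, hl⟩ := hConn α b
  obtain ⟨l', hl'⟩ := hConn α b'
  refine ⟨l, l'.reverse, single_eq_foldr_fGen_eGen hEF α l l'.reverse b b' hl ?_⟩
  rwa [wordL, List.foldl_reverse]

end
end
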